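/- In any G-algebra, if x ≤ z and y ≤ z then (x ≻ y) ≻ y ≤ z. -/

import Mathlib

/-! Since `y ≤ z`, axiom (G3) gives `z = (z ≻ y) ≻ y`. Exchange (G4) turns `x ≤ (z ≻ y) ≻ y` into
`z ≻ y ≤ x ≻ y`, and, because `((x ≻ y) ≻ y) ≻ y = x ≻ y`, a second exchange turns this into
`(x ≻ y) ≻ y ≤ (z ≻ y) ≻ y = z`. -/

class GAlgebra (A : Type*) where
  succ : A → A → A
  one : A
  g1 : ∀ x, succ one x = x
  g2 : ∀ x, succ x one = one
  g3 : ∀ x y, succ (succ x y) y = succ (succ y x) x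
  g4 : ∀ x y z, succ x (succ y z) = one → succ y (succ x z) = one

open GAlgebra

local infixr:70 " ≻ " => GAlgebra.succ

namespace GAlgebra

variable {A : Type*} [GAlgebra A]

theorem succ_self (x : A) : x ≻ x = one := by
  simpa only [g1, g2] using (g3 x one).symm

theorem le_succ_left (x y : A) : y ≻ (x ≻ y) = one :=
  g4 x y y (by rw [succ_self, g2])

theorem succ_succ_of_le {x y : A} (h : x ≻ y = one) : (y ≻ x) ≻ x = y := by
  rw [← g3, h, g1]

theorem succ_succ_succ (x y : A) : ((x ≻ y) ≻ y) ≻ y = x ≻ y := by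
  rw [g3 (x ≻ y) y, le_succ_left, g1]

theorem succ_le_succ_of_le {x y z : A} (hxz : x ≻ z = one) (hyz : y ≻ z = one) :
    (z ≻ y) ≻ (x ≻ y) = one :=
  g4 x (z ≻ y) y (by rw [succ_succ_of_le hyz]; exact hxz)

end GAlgebra

theorem stmt7 {A : Type*} [GAlgebra A] (x y z : A) (h1 : x ≻ z = (one : A)) (h2 : y ≻ z = (one : A)) :
    ((x ≻ y) ≻ y) ≻ z = (one : A) := by
  have h := g4 (z ≻ y) ((x ≻ y) ≻ y) y (by rw [succ_succ_succ]; exact succ_le_succ_of_le h1 h2)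
  rwa [succ_succ_of_le h2] at h
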